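/- Let r0 : ℂ → A⊗A satisfy the classical Yang–Baxter equation [r0^{12}(v), r0^{13}(v+v')] − [r0^{23}(v'), r0^{12}(v)] + [r0^{13}(v+v'), r0^{23}(v')] = 0 (commutators taken in A⊗A⊗A) for all v, v' ∈ ℂ, together with the unitarity condition r0^{21}(−v) = −r0(v). Suppose r0(v) = R(v) + α(v)⊗1 − 1⊗α(−v) + h(v)·(1⊗1), where for every v the tensor R(v) lies in sl_N⊗sl_N (i.e. (Tr⊗id)(R(v)) = 0 and (id⊗Tr)(R(v)) = 0), α(v) ∈ A is traceless, and h(v) ∈ ℂ. Then for all v, v' ∈ ℂ: [R(v−v'), α(v)⊗1 + 1⊗α(v')] = 0 and [α(v), α(v')] = 0. In particular, if α(v) = b + v·a for fixed traceless matrices a, b ∈ A, then [R(v), a⊗1 + 1⊗a] = 0, [R(v), b⊗1 + 1⊗b + v·(a⊗1)] = 0, and [b, a] = 0 for all v ∈ ℂ. -/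
import Mathlib


open scoped TensorProduct
set_option maxHeartbeats 1000000
noncomputable section

/-- The algebra of `N × N` complex matrices. -/
abbrev Mat (N : ℕ) := Matrix (Fin N) (Fin N) ℂ
/-- `A ⊗ A`. -/
abbrev TT (N : ℕ) := Mat N ⊗[ℂ] Mat N
/-- `A ⊗ A ⊗ A`. -/
abbrev TTT (N : ℕ) := Mat N ⊗[ℂ] (Mat N ⊗[ℂ] Mat N)

variable (N : ℕ)

/-- `x^{12}`: `a ⊗ b ↦ a ⊗ b ⊗ 1`. -/
def leg12 : TT N →ₐ[ℂ] TTT N :=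
  Algebra.TensorProduct.map (AlgHom.id ℂ (Mat N))
    (Algebra.TensorProduct.includeLeft (R := ℂ) (A := Mat N) (B := Mat N))

/-- `x^{13}`: `a ⊗ b ↦ a ⊗ 1 ⊗ b`. -/
def leg13 : TT N →ₐ[ℂ] TTT N :=
  Algebra.TensorProduct.map (AlgHom.id ℂ (Mat N))
    (Algebra.TensorProduct.includeRight (R := ℂ) (A := Mat N) (B := Mat N))

/-- `x^{23}`: `a ⊗ b ↦ 1 ⊗ a ⊗ b`. -/
def leg23 : TT N →ₐ[ℂ] TTT N :=
  Algebra.TensorProduct.includeRight (R := ℂ) (A := Mat N) (B := TT N)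

/-- `x^{21}`: `a ⊗ b ↦ b ⊗ a`. -/
def flip21 : TT N →ₐ[ℂ] TT N :=
  (Algebra.TensorProduct.comm ℂ (Mat N) (Mat N)).toAlgHom

/-- `Tr ⊗ id : A ⊗ A → A`. -/
def trId : TT N →ₗ[ℂ] Mat N :=
  (TensorProduct.lid ℂ (Mat N)).toLinearMap ∘ₗ
    TensorProduct.map (Matrix.traceLinearMap (Fin N) ℂ ℂ) LinearMap.id

/-- `id ⊗ Tr : A ⊗ A → A`. -/
def idTr : TT N →ₗ[ℂ] Mat N :=
  (TensorProduct.rid ℂ (Mat N)).toLinearMap ∘ₗ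
    TensorProduct.map LinearMap.id (Matrix.traceLinearMap (Fin N) ℂ ℂ)


set_option synthInstance.maxHeartbeats 1000000

instance (N : ℕ) : LeftDistribClass (TTT N) := ⟨fun a b c => Distrib.left_distrib a b c⟩
instance (N : ℕ) : RightDistribClass (TTT N) := ⟨fun a b c => Distrib.right_distrib a b c⟩
instance (N : ℕ) : LeftDistribClass (TT N) := ⟨fun a b c => Distrib.left_distrib a b c⟩
instance (N : ℕ) : RightDistribClass (TT N) := ⟨fun a b c => Distrib.right_distrib a b c⟩

/-- `id ⊗ id ⊗ Tr : A ⊗ A ⊗ A → A ⊗ A`. -/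
def T3 : TTT N →ₗ[ℂ] TT N := TensorProduct.map LinearMap.id (idTr N)

lemma zmul3 (x : TTT N) : (0 : TTT N) * x = 0 := zero_mul x
lemma mulz3 (x : TTT N) : x * (0 : TTT N) = 0 := mul_zero x
lemma zmul2 (x : TT N) : (0 : TT N) * x = 0 := zero_mul x
lemma mulz2 (x : TT N) : x * (0 : TT N) = 0 := mul_zero x
lemma onemul2 (x : TT N) : (1 : TT N) * x = x := one_mul x
lemma mulone2 (x : TT N) : x * (1 : TT N) = x := mul_one x

lemma idTr_tmul (a b : Mat N) : idTr N (a ⊗ₜ[ℂ] b) = b.trace • a := by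
  simp [idTr, TensorProduct.smul_tmul']

lemma trId_tmul (a b : Mat N) : trId N (a ⊗ₜ[ℂ] b) = a.trace • b := by
  simp [trId]

lemma leg12_tmul (a b : Mat N) : leg12 N (a ⊗ₜ[ℂ] b) = a ⊗ₜ[ℂ] (b ⊗ₜ[ℂ] (1 : Mat N)) := by
  simp [leg12]

lemma leg13_tmul (a b : Mat N) : leg13 N (a ⊗ₜ[ℂ] b) = a ⊗ₜ[ℂ] ((1 : Mat N) ⊗ₜ[ℂ] b) := by
  simp [leg13]

lemma leg23_tmul (a b : Mat N) : leg23 N (a ⊗ₜ[ℂ] b) = (1 : Mat N) ⊗ₜ[ℂ] (a ⊗ₜ[ℂ] b) := by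
  simp [leg23]

lemma L1 (x y : TT N) : T3 N (leg12 N x * leg13 N y) = x * (idTr N y ⊗ₜ[ℂ] (1 : Mat N)) := by
  induction x using TensorProduct.induction_on with
  | zero => rw [map_zero, zmul3, map_zero, zmul2]
  | tmul a b =>
    induction y using TensorProduct.induction_on with
    | zero => rw [map_zero, mulz3, map_zero, map_zero, TensorProduct.zero_tmul, mulz2]
    | tmul c d =>
      simp [leg12_tmul, leg13_tmul, idTr_tmul, T3, Algebra.TensorProduct.tmul_mul_tmul,
        TensorProduct.smul_tmul', TensorProduct.tmul_smul, mul_comm]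
    | add y1 y2 h1 h2 =>
      rw [map_add, mul_add, map_add, h1, h2, map_add, TensorProduct.add_tmul, mul_add]
  | add x1 x2 h1 h2 => rw [map_add, add_mul, map_add, h1, h2, add_mul]

lemma L2 (x y : TT N) : T3 N (leg13 N y * leg12 N x) = (idTr N y ⊗ₜ[ℂ] (1 : Mat N)) * x := by
  induction x using TensorProduct.induction_on with
  | zero => rw [map_zero, mulz3, map_zero, mulz2]
  | tmul a b =>
    induction y using TensorProduct.induction_on with
    | zero => rw [map_zero, zmul3, map_zero, map_zero, TensorProduct.zero_tmul, zmul2]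
    | tmul c d =>
      simp [leg12_tmul, leg13_tmul, idTr_tmul, T3, Algebra.TensorProduct.tmul_mul_tmul,
        TensorProduct.smul_tmul', TensorProduct.tmul_smul, mul_comm]
    | add y1 y2 h1 h2 =>
      rw [map_add, add_mul, map_add, h1, h2, map_add, TensorProduct.add_tmul, add_mul]
  | add x1 x2 h1 h2 => rw [map_add, mul_add, map_add, h1, h2, mul_add]

lemma L3 (x y : TT N) : T3 N (leg23 N y * leg12 N x) = ((1 : Mat N) ⊗ₜ[ℂ] idTr N y) * x := by
  induction x using TensorProduct.induction_on with
  | zero => rw [map_zero, mulz3, map_zero, mulz2]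
  | tmul a b =>
    induction y using TensorProduct.induction_on with
    | zero => rw [map_zero, zmul3, map_zero, map_zero, TensorProduct.tmul_zero, zmul2]
    | tmul c d =>
      simp [leg12_tmul, leg23_tmul, idTr_tmul, T3, Algebra.TensorProduct.tmul_mul_tmul,
        TensorProduct.smul_tmul', TensorProduct.tmul_smul, mul_comm]
    | add y1 y2 h1 h2 =>
      rw [map_add, add_mul, map_add, h1, h2, map_add, TensorProduct.tmul_add, add_mul]
  | add x1 x2 h1 h2 => rw [map_add, mul_add, map_add, h1, h2, mul_add]

lemma L4 (x y : TT N) : T3 N (leg12 N x * leg23 N y) = x * ((1 : Mat N) ⊗ₜ[ℂ] idTr N y) := by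
  induction x using TensorProduct.induction_on with
  | zero => rw [map_zero, zmul3, map_zero, zmul2]
  | tmul a b =>
    induction y using TensorProduct.induction_on with
    | zero => rw [map_zero, mulz3, map_zero, map_zero, TensorProduct.tmul_zero, mulz2]
    | tmul c d =>
      simp [leg12_tmul, leg23_tmul, idTr_tmul, T3, Algebra.TensorProduct.tmul_mul_tmul,
        TensorProduct.smul_tmul', TensorProduct.tmul_smul, mul_comm]
    | add y1 y2 h1 h2 =>
      rw [map_add, mul_add, map_add, h1, h2, map_add, TensorProduct.tmul_add, mul_add]
  | add x1 x2 h1 h2 => rw [map_add, add_mul, map_add, h1, h2, add_mul]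

lemma L5 (x y : TT N) : T3 N (leg13 N x * leg23 N y) = T3 N (leg23 N y * leg13 N x) := by
  induction x using TensorProduct.induction_on with
  | zero => rw [map_zero, zmul3, mulz3]
  | tmul a b =>
    induction y using TensorProduct.induction_on with
    | zero => rw [map_zero, mulz3, zmul3]
    | tmul c d =>
      simp only [leg13_tmul, leg23_tmul, Algebra.TensorProduct.tmul_mul_tmul, T3,
        TensorProduct.map_tmul, LinearMap.id_coe, id_eq, idTr_tmul, one_mul, mul_one,
        TensorProduct.tmul_smul]
      rw [Matrix.trace_mul_comm]
    | add y1 y2 h1 h2 =>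
      rw [map_add, mul_add, add_mul, map_add, map_add, h1, h2]
  | add x1 x2 h1 h2 => rw [map_add, add_mul, mul_add, map_add, map_add, h1, h2]

lemma M1 (z : TT N) (c : Mat N) :
    trId N (z * (c ⊗ₜ[ℂ] (1 : Mat N))) = trId N ((c ⊗ₜ[ℂ] (1 : Mat N)) * z) := by
  induction z using TensorProduct.induction_on with
  | zero => rw [zmul2, mulz2]
  | tmul a b =>
    simp only [Algebra.TensorProduct.tmul_mul_tmul, trId_tmul, one_mul, mul_one]
    rw [Matrix.trace_mul_comm]
  | add z1 z2 h1 h2 => rw [add_mul, mul_add, map_add, map_add, h1, h2]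

lemma M2 (z : TT N) (d : Mat N) :
    trId N (z * ((1 : Mat N) ⊗ₜ[ℂ] d)) = trId N z * d := by
  induction z using TensorProduct.induction_on with
  | zero => simp [zmul2]
  | tmul a b =>
    simp only [Algebra.TensorProduct.tmul_mul_tmul, trId_tmul, one_mul, mul_one,
      smul_mul_assoc]
  | add z1 z2 h1 h2 => rw [add_mul, map_add, map_add, h1, h2, add_mul]

lemma M3 (z : TT N) (d : Mat N) :
    trId N (((1 : Mat N) ⊗ₜ[ℂ] d) * z) = d * trId N z := by
  induction z using TensorProduct.induction_on with
  | zero => simp [mulz2]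
  | tmul a b =>
    simp only [Algebra.TensorProduct.tmul_mul_tmul, trId_tmul, one_mul, mul_one,
      mul_smul_comm]
  | add z1 z2 h1 h2 => rw [mul_add, map_add, map_add, h1, h2, mul_add]

/-- Lemma `last-AYBE-lem`: for a unitary solution `r0` of the CYBE of
the form `r0(v) = R(v) + α(v) ⊗ 1 − 1 ⊗ α(−v) + h(v)·(1⊗1)` with `R(v) ∈ sl_N ⊗ sl_N` and
`α(v)` traceless, one has `[R(v−v'), α(v)⊗1 + 1⊗α(v')] = 0` and `[α(v), α(v')] = 0`; in
particular if `α(v) = b + v·a` then `[R(v), a⊗1+1⊗a] = 0`,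
`[R(v), b⊗1+1⊗b+v·(a⊗1)] = 0` and `[b,a] = 0`. -/
theorem stmt11 (N : ℕ)
    (r0 : ℂ → TT N)
    (hCYBE : ∀ v v' : ℂ,
      (leg12 N (r0 v) * leg13 N (r0 (v + v')) - leg13 N (r0 (v + v')) * leg12 N (r0 v))
        - (leg23 N (r0 v') * leg12 N (r0 v) - leg12 N (r0 v) * leg23 N (r0 v'))
        + (leg13 N (r0 (v + v')) * leg23 N (r0 v')
            - leg23 N (r0 v') * leg13 N (r0 (v + v'))) = 0)
    (hunit : ∀ v : ℂ, flip21 N (r0 (-v)) = - r0 v)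
    (R : ℂ → TT N) (α : ℂ → Mat N) (h : ℂ → ℂ)
    (hR1 : ∀ v : ℂ, trId N (R v) = 0)
    (hR2 : ∀ v : ℂ, idTr N (R v) = 0)
    (hα : ∀ v : ℂ, Matrix.trace (α v) = 0)
    (hdec : ∀ v : ℂ,
      r0 v = R v + α v ⊗ₜ[ℂ] (1 : Mat N) - (1 : Mat N) ⊗ₜ[ℂ] α (-v) + h v • (1 : TT N)) :
    (∀ v v' : ℂ,
      R (v - v') * (α v ⊗ₜ[ℂ] (1 : Mat N) + (1 : Mat N) ⊗ₜ[ℂ] α v')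
          - (α v ⊗ₜ[ℂ] (1 : Mat N) + (1 : Mat N) ⊗ₜ[ℂ] α v') * R (v - v') = 0
        ∧ α v * α v' - α v' * α v = 0)
    ∧ (∀ a b : Mat N, Matrix.trace a = 0 → Matrix.trace b = 0 →
        (∀ v : ℂ, α v = b + v • a) →
        ∀ v : ℂ,
          R v * (a ⊗ₜ[ℂ] (1 : Mat N) + (1 : Mat N) ⊗ₜ[ℂ] a)
              - (a ⊗ₜ[ℂ] (1 : Mat N) + (1 : Mat N) ⊗ₜ[ℂ] a) * R v = 0
          ∧ R v * (b ⊗ₜ[ℂ] (1 : Mat N) + (1 : Mat N) ⊗ₜ[ℂ] b + v • (a ⊗ₜ[ℂ] (1 : Mat N)))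
              - (b ⊗ₜ[ℂ] (1 : Mat N) + (1 : Mat N) ⊗ₜ[ℂ] b
                  + v • (a ⊗ₜ[ℂ] (1 : Mat N))) * R v = 0
          ∧ b * a - a * b = 0) := by

  rcases eq_or_ne N 0 with rfl | hN0
  · exact ⟨fun v v' => ⟨Subsingleton.elim _ _, Subsingleton.elim _ _⟩,
      fun a b _ _ _ v => ⟨Subsingleton.elim _ _, Subsingleton.elim _ _, Subsingleton.elim _ _⟩⟩
  have hNc : (N : ℂ) ≠ 0 := Nat.cast_ne_zero.mpr hN0
  have htr1 : (Matrix.trace (1 : Mat N)) = (N : ℂ) := by simp [Matrix.trace_one]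
  have hidTr : ∀ u : ℂ, idTr N (r0 u) = (N : ℂ) • α u + ((N : ℂ) * h u) • (1 : Mat N) := by
    intro u
    rw [hdec u]
    simp only [map_add, map_sub, map_smul, hR2, idTr_tmul, htr1, hα,
      Algebra.TensorProduct.one_def]
    module
  have hY : ∀ u : ℂ, (idTr N (r0 u)) ⊗ₜ[ℂ] (1 : Mat N)
      = (N : ℂ) • (α u ⊗ₜ[ℂ] (1 : Mat N)) + ((N : ℂ) * h u) • (1 : TT N) := by
    intro u
    rw [hidTr u]
    simp only [TensorProduct.add_tmul, TensorProduct.smul_tmul',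
      Algebra.TensorProduct.one_def]
  have hZ : ∀ u : ℂ, (1 : Mat N) ⊗ₜ[ℂ] (idTr N (r0 u))
      = (N : ℂ) • ((1 : Mat N) ⊗ₜ[ℂ] α u) + ((N : ℂ) * h u) • (1 : TT N) := by
    intro u
    rw [hidTr u]
    simp only [TensorProduct.tmul_add, TensorProduct.tmul_smul,
      Algebra.TensorProduct.one_def]
  have key1 : ∀ v v' : ℂ,
      r0 v * (α (v + v') ⊗ₜ[ℂ] (1 : Mat N) + (1 : Mat N) ⊗ₜ[ℂ] α v')
        - (α (v + v') ⊗ₜ[ℂ] (1 : Mat N) + (1 : Mat N) ⊗ₜ[ℂ] α v') * r0 v = 0 := by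
    intro v v'
    have h1 := congrArg (T3 N) (hCYBE v v')
    rw [map_zero] at h1
    simp only [map_add, map_sub] at h1
    rw [L1, L2, L3, L4, L5, sub_self, add_zero] at h1
    rw [hY (v + v'), hZ v'] at h1
    have h2 : (N : ℂ) • (r0 v * (α (v + v') ⊗ₜ[ℂ] (1 : Mat N) + (1 : Mat N) ⊗ₜ[ℂ] α v')
        - (α (v + v') ⊗ₜ[ℂ] (1 : Mat N) + (1 : Mat N) ⊗ₜ[ℂ] α v') * r0 v) = 0 := by
      rw [← h1]
      simp only [mul_add, add_mul, smul_mul_assoc, mul_smul_comm, onemul2, mulone2,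
        smul_add, smul_sub]
      module
    exact (smul_eq_zero.mp h2).resolve_left hNc
  have hE : ∀ v v' : ℂ,
      (R v * (α (v + v') ⊗ₜ[ℂ] (1 : Mat N) + (1 : Mat N) ⊗ₜ[ℂ] α v')
          - (α (v + v') ⊗ₜ[ℂ] (1 : Mat N) + (1 : Mat N) ⊗ₜ[ℂ] α v') * R v)
        + (α v * α (v + v') - α (v + v') * α v) ⊗ₜ[ℂ] (1 : Mat N)
        - (1 : Mat N) ⊗ₜ[ℂ] (α (-v) * α v' - α v' * α (-v)) = 0 := by
    intro v v'
    have h1 := key1 v v'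
    rw [hdec v] at h1
    rw [← h1]
    simp only [mul_add, add_mul, sub_mul, mul_sub, smul_mul_assoc, mul_smul_comm,
      onemul2, mulone2, Algebra.TensorProduct.tmul_mul_tmul, one_mul, mul_one,
      TensorProduct.sub_tmul, TensorProduct.tmul_sub]
    module
  have hc2 : ∀ v v' : ℂ, α v' * α (-v) - α (-v) * α v' = 0 := by
    intro v v'
    have h1 := congrArg (trId N) (hE v v')
    rw [map_zero] at h1
    have h2 : (N : ℂ) • (α v' * α (-v) - α (-v) * α v') = 0 := by
      rw [← h1]
      simp only [mul_add, add_mul, map_add, map_sub, M1, M2, M3, hR1, trId_tmul, htr1,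
        Matrix.trace_sub, zero_mul, mul_zero]
      rw [Matrix.trace_mul_comm (α v) (α (v + v'))]
      module
    exact (smul_eq_zero.mp h2).resolve_left hNc
  have hcomm : ∀ v v' : ℂ, α v * α v' - α v' * α v = 0 := by
    intro v v'
    have := hc2 (-v') v
    rwa [neg_neg] at this
  have keyR : ∀ v v' : ℂ,
      R v * (α (v + v') ⊗ₜ[ℂ] (1 : Mat N) + (1 : Mat N) ⊗ₜ[ℂ] α v')
        - (α (v + v') ⊗ₜ[ℂ] (1 : Mat N) + (1 : Mat N) ⊗ₜ[ℂ] α v') * R v = 0 := by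
    intro v v'
    have h1 := hE v v'
    rw [hcomm v (v + v'), hcomm (-v) v', TensorProduct.zero_tmul, TensorProduct.tmul_zero,
      add_zero, sub_zero] at h1
    exact h1
  refine ⟨fun v v' => ⟨?_, hcomm v v'⟩, ?_⟩
  · have := keyR (v - v') v'
    rwa [sub_add_cancel] at this
  · intro a b ha hb hab v
    have k0 := keyR v 0
    have k1 := keyR v 1
    rw [hab, hab] at k0 k1
    simp only [add_zero, zero_smul, one_smul] at k0
    have e0 : (b + v • a) ⊗ₜ[ℂ] (1 : Mat N) + (1 : Mat N) ⊗ₜ[ℂ] b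
        = b ⊗ₜ[ℂ] (1 : Mat N) + (1 : Mat N) ⊗ₜ[ℂ] b + v • (a ⊗ₜ[ℂ] (1 : Mat N)) := by
      rw [TensorProduct.add_tmul, TensorProduct.smul_tmul']
      module
    rw [e0] at k0
    refine ⟨?_, k0, ?_⟩
    · have e1 : α (v + 1) ⊗ₜ[ℂ] (1 : Mat N) + (1 : Mat N) ⊗ₜ[ℂ] α 1
          = (b ⊗ₜ[ℂ] (1 : Mat N) + (1 : Mat N) ⊗ₜ[ℂ] b + v • (a ⊗ₜ[ℂ] (1 : Mat N)))
            + (a ⊗ₜ[ℂ] (1 : Mat N) + (1 : Mat N) ⊗ₜ[ℂ] a) := by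
        rw [hab, hab]
        simp only [TensorProduct.add_tmul, TensorProduct.tmul_add, TensorProduct.smul_tmul',
          one_smul, add_smul]
        module
      rw [hab, hab] at e1
      rw [e1] at k1
      have e2 : R v * (a ⊗ₜ[ℂ] (1 : Mat N) + (1 : Mat N) ⊗ₜ[ℂ] a)
          - (a ⊗ₜ[ℂ] (1 : Mat N) + (1 : Mat N) ⊗ₜ[ℂ] a) * R v
          = (R v * ((b ⊗ₜ[ℂ] (1 : Mat N) + (1 : Mat N) ⊗ₜ[ℂ] b + v • (a ⊗ₜ[ℂ] (1 : Mat N)))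
                + (a ⊗ₜ[ℂ] (1 : Mat N) + (1 : Mat N) ⊗ₜ[ℂ] a))
              - ((b ⊗ₜ[ℂ] (1 : Mat N) + (1 : Mat N) ⊗ₜ[ℂ] b + v • (a ⊗ₜ[ℂ] (1 : Mat N)))
                + (a ⊗ₜ[ℂ] (1 : Mat N) + (1 : Mat N) ⊗ₜ[ℂ] a)) * R v)
            - (R v * (b ⊗ₜ[ℂ] (1 : Mat N) + (1 : Mat N) ⊗ₜ[ℂ] b + v • (a ⊗ₜ[ℂ] (1 : Mat N)))
              - (b ⊗ₜ[ℂ] (1 : Mat N) + (1 : Mat N) ⊗ₜ[ℂ] b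
                  + v • (a ⊗ₜ[ℂ] (1 : Mat N))) * R v) := by
        simp only [mul_add, add_mul]
        module
      rw [e2, k0, k1, sub_zero]
    · have h3 := hcomm 0 1
      rw [hab, hab] at h3
      simp only [zero_smul, add_zero, one_smul] at h3
      have e3 : b * a - a * b = b * (b + a) - (b + a) * b := by
        simp only [mul_add, add_mul]
        module
      rw [e3]
      exact h3
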